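/- Let ξ ∈ ℝ³ with |(ξ₁,ξ₂)| > 0, let η₁, η₂ be the orthonormal vectors η₁ = (1/|ξ'|)(ξ₂,-ξ₁,0), η₂ = η₁ × (ξ/|ξ|), let k > 0, τ ≥ 1 with τ² ≥ |ξ|²/4 and τ ≥ k, and define the complex vectors ζ₁ = ξ/2 + i√(τ² + |ξ|²/4) η₁ + √(τ² + k²) η₂ and ζ₂ = -ξ/2 - i√(τ² + |ξ|²/4) η₁ + √(τ² + k²) η₂ (with real vectors viewed in ℂ³). Then ζ₁ · ζ₁ = k², ζ₂ · ζ₂ = k², and iζ₁ + conj(iζ₂) = iξ. -/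

import Mathlib

open Matrix Complex

noncomputable section

def nrm (x : Fin 3 → ℝ) : ℝ := Real.sqrt (x ⬝ᵥ x)

/-- View a real 3-vector as a complex 3-vector. -/
def cv (x : Fin 3 → ℝ) : Fin 3 → ℂ := fun j => (x j : ℂ)

/-!
Write `ζ = α ξ + i β η₁ + γ η₂` with `ξ, η₁, η₂` real and pairwise orthogonal, `η₁, η₂` unit
vectors. Since the complex dot product is bilinear and restricts to the real one, the cross terms
vanish and `ζ · ζ = α² |ξ|² - β² + γ²`; with `α = ±1/2`, `β² = τ² + |ξ|²/4`, `γ² = τ² + k²` this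
is `k²`. Finally `iζ₁ + conj(iζ₂) = i(ζ₁ - conj ζ₂)` and `ζ₁ - conj ζ₂ = ξ`.
-/

lemma dotProduct_self_nonneg_real {n : Type*} [Fintype n] (x : n → ℝ) : 0 ≤ x ⬝ᵥ x := by
  simpa [star_trivial] using dotProduct_self_star_nonneg x

lemma nrm_sq (x : Fin 3 → ℝ) : nrm x ^ 2 = x ⬝ᵥ x :=
  Real.sq_sqrt (dotProduct_self_nonneg_real x)

lemma smul_dotProduct_smul_self {R n : Type*} [CommSemiring R] [Fintype n] (c : R) (w : n → R) :
    (c • w) ⬝ᵥ (c • w) = c ^ 2 * (w ⬝ᵥ w) := by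
  rw [smul_dotProduct, dotProduct_smul, smul_eq_mul, smul_eq_mul]
  ring

lemma inv_nrm_smul_dotProduct_self {x w : Fin 3 → ℝ} (hw : w ⬝ᵥ w = x ⬝ᵥ x) (hx : 0 < nrm x) :
    ((1 / nrm x) • w) ⬝ᵥ ((1 / nrm x) • w) = 1 := by
  rw [smul_dotProduct_smul_self, hw, ← nrm_sq]
  field_simp

lemma nrm_pos_of_nrm_horizontal_pos {ξ : Fin 3 → ℝ} (h : 0 < nrm ![ξ 0, ξ 1, 0]) :
    0 < nrm ξ := by
  rw [nrm, Real.sqrt_pos] at h ⊢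
  simp only [dotProduct, Fin.sum_univ_three, cons_val_zero, cons_val_one, cons_val, mul_zero,
    add_zero] at h ⊢
  nlinarith [sq_nonneg (ξ 2)]

lemma frame_orthonormal {ξ η₁ η₂ : Fin 3 → ℝ} (hξ' : 0 < nrm ![ξ 0, ξ 1, 0])
    (hη₁ : η₁ = (1 / nrm ![ξ 0, ξ 1, 0]) • ![ξ 1, -ξ 0, 0])
    (hη₂ : η₂ = crossProduct η₁ ((1 / nrm ξ) • ξ)) :
    ξ ⬝ᵥ η₁ = 0 ∧ ξ ⬝ᵥ η₂ = 0 ∧ η₁ ⬝ᵥ η₂ = 0 ∧ η₁ ⬝ᵥ η₁ = 1 ∧ η₂ ⬝ᵥ η₂ = 1 := by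
  have hξη₁ : ξ ⬝ᵥ η₁ = 0 := by
    rw [hη₁, dotProduct_smul]
    simp only [dotProduct, Fin.sum_univ_three, cons_val_zero, cons_val_one, cons_val, smul_eq_mul]
    ring
  have hη₁η₁ : η₁ ⬝ᵥ η₁ = 1 := by
    rw [hη₁]
    refine inv_nrm_smul_dotProduct_self ?_ hξ'
    simp only [dotProduct, Fin.sum_univ_three, cons_val_zero, cons_val_one, cons_val]
    ring
  have hunit : ((1 / nrm ξ) • ξ) ⬝ᵥ ((1 / nrm ξ) • ξ) = 1 :=
    inv_nrm_smul_dotProduct_self rfl (nrm_pos_of_nrm_horizontal_pos hξ')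
  refine ⟨hξη₁, ?_, ?_, hη₁η₁, ?_⟩
  · have h := dot_cross_self η₁ ((1 / nrm ξ) • ξ)
    rwa [smul_dotProduct, smul_eq_mul, mul_eq_zero, ← hη₂,
      or_iff_right (by simpa using (nrm_pos_of_nrm_horizontal_pos hξ').ne')] at h
  · rw [hη₂, dot_self_cross]
  · rw [hη₂, cross_dot_cross, hη₁η₁, hunit, smul_dotProduct, hξη₁]
    simp

lemma cv_dotProduct_cv (x y : Fin 3 → ℝ) : cv x ⬝ᵥ cv y = ((x ⬝ᵥ y : ℝ) : ℂ) := by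
  simp [cv, dotProduct]

lemma dotProduct_self_of_orthonormal {x u v : Fin 3 → ℝ} (a b c : ℂ)
    (hxu : x ⬝ᵥ u = 0) (hxv : x ⬝ᵥ v = 0) (huv : u ⬝ᵥ v = 0) (hu : u ⬝ᵥ u = 1)
    (hv : v ⬝ᵥ v = 1) :
    (a • cv x + b • cv u + c • cv v) ⬝ᵥ (a • cv x + b • cv u + c • cv v)
      = a ^ 2 * ((x ⬝ᵥ x : ℝ) : ℂ) + b ^ 2 + c ^ 2 := by
  simp only [add_dotProduct, dotProduct_add, smul_dotProduct, dotProduct_smul, smul_eq_mul,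
    cv_dotProduct_cv, dotProduct_comm u x, dotProduct_comm v x, dotProduct_comm v u,
    hxu, hxv, huv, hu, hv]
  push_cast
  ring

theorem stmt_1_general (ξ η₁ η₂ : Fin 3 → ℝ) (k τ : ℝ)
    (hξ' : nrm ![ξ 0, ξ 1, 0] > 0)
    (hη₁ : η₁ = (1 / nrm ![ξ 0, ξ 1, 0]) • ![ξ 1, -ξ 0, 0])
    (hη₂ : η₂ = crossProduct η₁ ((1 / nrm ξ) • ξ))
    (ζ₁ ζ₂ : Fin 3 → ℂ)
    (hζ₁ : ζ₁ = fun j => (ξ j : ℂ) / 2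
        + Complex.I * (Real.sqrt (τ^2 + (nrm ξ)^2 / 4) : ℝ) * (η₁ j : ℂ)
        + (Real.sqrt (τ^2 + k^2) : ℝ) * (η₂ j : ℂ))
    (hζ₂ : ζ₂ = fun j => -(ξ j : ℂ) / 2
        - Complex.I * (Real.sqrt (τ^2 + (nrm ξ)^2 / 4) : ℝ) * (η₁ j : ℂ)
        + (Real.sqrt (τ^2 + k^2) : ℝ) * (η₂ j : ℂ)) :
    ζ₁ ⬝ᵥ ζ₁ = (k : ℂ)^2 ∧ ζ₂ ⬝ᵥ ζ₂ = (k : ℂ)^2 ∧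
      (fun j => Complex.I * ζ₁ j + starRingEnd ℂ (Complex.I * ζ₂ j))
        = fun j => Complex.I * (ξ j : ℂ) := by
  obtain ⟨hξη₁, hξη₂, hη₁η₂, hη₁η₁, hη₂η₂⟩ := frame_orthonormal hξ' hη₁ hη₂
  set S := Real.sqrt (τ^2 + (nrm ξ)^2 / 4)
  set T := Real.sqrt (τ^2 + k^2)
  have hS : ((S : ℝ) : ℂ) ^ 2 = τ ^ 2 + ((ξ ⬝ᵥ ξ : ℝ) : ℂ) / 4 := by
    rw [← Complex.ofReal_pow, Real.sq_sqrt (by positivity), nrm_sq]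
    push_cast; ring
  have hT : ((T : ℝ) : ℂ) ^ 2 = τ ^ 2 + k ^ 2 := by
    rw [← Complex.ofReal_pow, Real.sq_sqrt (by positivity)]
    push_cast; ring
  have hζ₁' : ζ₁ = (1 / 2 : ℂ) • cv ξ + (I * S) • cv η₁ + (T : ℂ) • cv η₂ := by
    rw [hζ₁]; funext j; simp only [Pi.add_apply, Pi.smul_apply, smul_eq_mul, cv]; ring
  have hζ₂' : ζ₂ = (-1 / 2 : ℂ) • cv ξ + (-(I * S)) • cv η₁ + (T : ℂ) • cv η₂ := by
    rw [hζ₂]; funext j; simp only [Pi.add_apply, Pi.smul_apply, smul_eq_mul, cv]; ring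
  refine ⟨?_, ?_, ?_⟩
  · rw [hζ₁', dotProduct_self_of_orthonormal _ _ _ hξη₁ hξη₂ hη₁η₂ hη₁η₁ hη₂η₂, mul_pow, I_sq,
      hS, hT]
    ring
  · rw [hζ₂', dotProduct_self_of_orthonormal _ _ _ hξη₁ hξη₂ hη₁η₂ hη₁η₁ hη₂η₂, neg_sq,
      mul_pow, I_sq, hS, hT]
    ring
  · funext j
    rw [hζ₁, hζ₂]
    simp only [map_add, map_sub, _root_.map_mul, map_neg, map_div₀, conj_I, conj_ofReal, map_ofNat]
    ring

theorem stmt_1 (ξ η₁ η₂ : Fin 3 → ℝ) (k τ : ℝ)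
    (hξ' : nrm ![ξ 0, ξ 1, 0] > 0)
    (hη₁ : η₁ = (1 / nrm ![ξ 0, ξ 1, 0]) • ![ξ 1, -ξ 0, 0])
    (hη₂ : η₂ = crossProduct η₁ ((1 / nrm ξ) • ξ))
    (hk : 0 < k) (hτ : 1 ≤ τ) (hτξ : (nrm ξ)^2 / 4 ≤ τ^2) (hτk : k ≤ τ)
    (ζ₁ ζ₂ : Fin 3 → ℂ)
    (hζ₁ : ζ₁ = fun j => (ξ j : ℂ) / 2
        + Complex.I * (Real.sqrt (τ^2 + (nrm ξ)^2 / 4) : ℝ) * (η₁ j : ℂ)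
        + (Real.sqrt (τ^2 + k^2) : ℝ) * (η₂ j : ℂ))
    (hζ₂ : ζ₂ = fun j => -(ξ j : ℂ) / 2
        - Complex.I * (Real.sqrt (τ^2 + (nrm ξ)^2 / 4) : ℝ) * (η₁ j : ℂ)
        + (Real.sqrt (τ^2 + k^2) : ℝ) * (η₂ j : ℂ)) :
    ζ₁ ⬝ᵥ ζ₁ = (k : ℂ)^2 ∧ ζ₂ ⬝ᵥ ζ₂ = (k : ℂ)^2 ∧
      (fun j => Complex.I * ζ₁ j + starRingEnd ℂ (Complex.I * ζ₂ j))
        = fun j => Complex.I * (ξ j : ℂ) :=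
  stmt_1_general ξ η₁ η₂ k τ hξ' hη₁ hη₂ ζ₁ ζ₂ hζ₁ hζ₂
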